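/- arXiv:0807.3811 — 3 statements merged into one kernel-verified Lean document; each statement's English description precedes it below -/
import Mathlib

section
/- Information gain is bounded by entropy decrease: for an ensemble {p_i, ρ^i_{AB}} with average state ρ_{AB} = Σ_i p_i ρ^i_{AB}, it holds that Σ_i p_i I(ρ^i_{AB}) − I(ρ_{AB}) ≤ S(ρ_{AB}) − Σ_i p_i S(ρ^i_{AB}), where I(σ_{AB}) = S(σ_A) + S(σ_B) − S(σ_AB) is the quantum mutual information and S the von Neumann entropy. -/
open Matrix Kronecker ComplexOrder

noncomputable def vnEntropy {n : Type*} [Fintype n] [DecidableEq n]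
    (ρ : Matrix n n ℂ) : ℝ :=
  if h : ρ.IsHermitian then (∑ i, Real.negMulLog (h.eigenvalues i)) / Real.log 2 else 0

noncomputable def ptraceSnd {a b : Type*} [Fintype b]
    (ρ : Matrix (a × b) (a × b) ℂ) : Matrix a a ℂ :=
  Matrix.of fun i j => ∑ k, ρ (i, k) (j, k)

noncomputable def ptraceFst {a b : Type*} [Fintype a]
    (ρ : Matrix (a × b) (a × b) ℂ) : Matrix b b ℂ :=
  Matrix.of fun i j => ∑ k, ρ (k, i) (k, j)

noncomputable def mutInfo {a b : Type*} [Fintype a] [Fintype b] [DecidableEq a] [DecidableEq b]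
    (ρ : Matrix (a × b) (a × b) ℂ) : ℝ :=
  vnEntropy (ptraceSnd ρ) + vnEntropy (ptraceFst ρ) - vnEntropy ρ

noncomputable def psiPlus : Fin 2 × Fin 2 → ℂ :=
  fun p => if p.1 = p.2 then ((Real.sqrt 2)⁻¹ : ℝ) else 0

def pauliZ : Matrix (Fin 2) (Fin 2) ℂ := !![1, 0; 0, -1]

/-! Writing `I = S_A + S_B - S_AB`, the `S_AB` terms match the right-hand side, and the claim
becomes concavity of the von Neumann entropy applied to the two marginals (the partial traces are
linear and positive, each being a sum of principal submatrices).

Concavity of `σ ↦ ∑ η(λ(σ))`, `η = negMulLog`: let `U` diagonalise the average `∑ pᵢ σᵢ`.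
For each `σᵢ`, the diagonal `dᵢ` of `U⋆ σᵢ U` is the image of the eigenvalues of `σᵢ` under the
doubly stochastic matrix `|Wⱼₖ|²` with `W` unitary, so Jensen along the rows gives
`∑ η(λ(σᵢ)) ≤ ∑ⱼ η(dᵢⱼ)`. Jensen in `i` then gives `∑ᵢ pᵢ ∑ⱼ η(dᵢⱼ) ≤ ∑ⱼ η(∑ᵢ pᵢ dᵢⱼ)`, and
the `∑ᵢ pᵢ dᵢⱼ` are the eigenvalues of the average. -/

theorem ConcaveOn.sum_map_le_sum_map_mulVec {n : Type*} [Fintype n] [DecidableEq n] {s : Set ℝ}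
    {f : ℝ → ℝ} (hf : ConcaveOn ℝ s f) {M : Matrix n n ℝ} (hM : M ∈ doublyStochastic ℝ n)
    {x : n → ℝ} (hx : ∀ k, x k ∈ s) :
    ∑ k, f (x k) ≤ ∑ j, f ((M *ᵥ x) j) :=
  calc ∑ k, f (x k) = ∑ j, ∑ k, M j k * f (x k) := by
        rw [Finset.sum_comm]
        simp [← Finset.sum_mul, sum_col_of_mem_doublyStochastic hM]
    _ ≤ ∑ j, f ((M *ᵥ x) j) := Finset.sum_le_sum fun j _ => by
        simpa [mulVec, dotProduct] using
          hf.le_map_sum (t := .univ) (fun k _ => nonneg_of_mem_doublyStochastic hM)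
            (sum_row_of_mem_doublyStochastic hM j) (fun k _ => hx k)

theorem Matrix.map_normSq_mem_doublyStochastic {n : Type*} [Fintype n] [DecidableEq n]
    {W : Matrix n n ℂ} (hW : W ∈ unitaryGroup n ℂ) :
    W.map Complex.normSq ∈ doublyStochastic ℝ n := by
  have hrow (j) : ∑ k, Complex.normSq (W j k) = 1 := by
    have := congr_fun₂ (mem_unitaryGroup_iff.mp hW) j j
    simp only [mul_apply, star_apply, Complex.star_def, Complex.mul_conj, one_apply_eq] at this
    exact_mod_cast this
  have hcol (k) : ∑ j, Complex.normSq (W j k) = 1 := by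
    have := congr_fun₂ (mem_unitaryGroup_iff'.mp hW) k k
    simp only [mul_apply, star_apply, Complex.star_def, mul_comm (starRingEnd ℂ _),
      Complex.mul_conj, one_apply_eq] at this
    exact_mod_cast this
  exact mem_doublyStochastic_iff_sum.mpr ⟨fun _ _ => Complex.normSq_nonneg _, hrow, hcol⟩

theorem Matrix.mul_diagonal_mul_star_apply_self {n : Type*} [Fintype n] [DecidableEq n]
    (W : Matrix n n ℂ) (d : n → ℝ) (j : n) :
    (W * diagonal (fun k => (d k : ℂ)) * star W) j j = ((W.map Complex.normSq *ᵥ d) j : ℂ) := by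
  simp only [mul_apply, diagonal_apply, mul_ite, mul_zero, Finset.sum_ite_eq', Finset.mem_univ,
    if_true, star_apply, mulVec, dotProduct, map_apply]
  push_cast
  refine Finset.sum_congr rfl fun k _ => ?_
  rw [Complex.normSq_eq_conj_mul_self, RCLike.star_def]
  ring

theorem Matrix.IsHermitian.sum_map_eigenvalues_le_sum_map_diag {n : Type*} [Fintype n]
    [DecidableEq n] {A : Matrix n n ℂ} (hA : A.IsHermitian) {s : Set ℝ} {f : ℝ → ℝ}
    (hf : ConcaveOn ℝ s f) (hs : ∀ k, hA.eigenvalues k ∈ s) {U : Matrix n n ℂ}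
    (hU : U ∈ unitaryGroup n ℂ) :
    ∑ k, f (hA.eigenvalues k) ≤ ∑ j, f ((star U * A * U) j j).re := by
  set W := star U * (hA.eigenvectorUnitary : Matrix n n ℂ)
  have hW : W ∈ unitaryGroup n ℂ := mul_mem (Unitary.star_mem hU) hA.eigenvectorUnitary.2
  have hconj : star U * A * U = W * diagonal (fun k => (hA.eigenvalues k : ℂ)) * star W := by
    conv_lhs => rw [hA.spectral_theorem]
    simp only [Unitary.conjStarAlgAut_apply, Matrix.mul_assoc, star_mul, star_star, W]
    rfl
  calc ∑ k, f (hA.eigenvalues k) ≤ ∑ j, f ((W.map Complex.normSq *ᵥ hA.eigenvalues) j) :=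
        hf.sum_map_le_sum_map_mulVec (map_normSq_mem_doublyStochastic hW) hs
    _ = ∑ j, f ((star U * A * U) j j).re := by
        simp [hconj, mul_diagonal_mul_star_apply_self]

theorem ConcaveOn.sum_mul_sum_map_eigenvalues_le {n ι : Type*} [Fintype n] [DecidableEq n]
    [Fintype ι] {f : ℝ → ℝ} (hf : ConcaveOn ℝ (Set.Ici 0) f) {p : ι → ℝ} (hp : ∀ i, 0 ≤ p i)
    (hp1 : ∑ i, p i = 1) {σ : ι → Matrix n n ℂ} (hσ : ∀ i, (σ i).PosSemidef)
    (hH : (∑ i, (p i : ℂ) • σ i).IsHermitian) :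
    ∑ i, p i * ∑ k, f ((hσ i).1.eigenvalues k) ≤ ∑ j, f (hH.eigenvalues j) := by
  set U := (hH.eigenvectorUnitary : Matrix n n ℂ)
  set d : ι → n → ℝ := fun i j => ((star U * σ i * U) j j).re
  have hd (i j) : 0 ≤ d i j :=
    (Complex.nonneg_iff.mp ((hσ i).conjTranspose_mul_mul_same U).diag_nonneg).1
  have heig (j) : hH.eigenvalues j = ∑ i, p i * d i j := by
    have := congr_arg (fun M : Matrix n n ℂ => (M j j).re)
      hH.conjStarAlgAut_star_eigenvectorUnitary
    simpa [d, U, Matrix.mul_sum, Matrix.sum_mul, Matrix.sum_apply] using this.symm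
  calc ∑ i, p i * ∑ k, f ((hσ i).1.eigenvalues k) ≤ ∑ i, p i * ∑ j, f (d i j) := by
        refine Finset.sum_le_sum fun i _ => mul_le_mul_of_nonneg_left ?_ (hp i)
        exact (hσ i).1.sum_map_eigenvalues_le_sum_map_diag hf (hσ i).eigenvalues_nonneg
          hH.eigenvectorUnitary.2
    _ = ∑ j, ∑ i, p i * f (d i j) := by simp_rw [Finset.mul_sum]; exact Finset.sum_comm
    _ ≤ ∑ j, f (∑ i, p i * d i j) := by
        gcongr with j
        simpa using hf.le_map_sum (t := .univ) (fun i _ => hp i) hp1 (fun i _ => hd i j)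
    _ = ∑ j, f (hH.eigenvalues j) := by simp [heig]

theorem ptraceSnd_eq_sum_submatrix {a b : Type*} [Fintype b] (ρ : Matrix (a × b) (a × b) ℂ) :
    ptraceSnd ρ = ∑ k, ρ.submatrix (·, k) (·, k) := by
  ext i j; simp [ptraceSnd, Matrix.sum_apply]

theorem ptraceFst_eq_sum_submatrix {a b : Type*} [Fintype a] (ρ : Matrix (a × b) (a × b) ℂ) :
    ptraceFst ρ = ∑ k, ρ.submatrix (k, ·) (k, ·) := by
  ext i j; simp [ptraceFst, Matrix.sum_apply]

theorem ptraceSnd_posSemidef {a b : Type*} [Fintype a] [Fintype b]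
    {ρ : Matrix (a × b) (a × b) ℂ} (hρ : ρ.PosSemidef) : (ptraceSnd ρ).PosSemidef := by
  rw [ptraceSnd_eq_sum_submatrix]
  exact posSemidef_sum _ fun k _ => hρ.submatrix _

theorem ptraceFst_posSemidef {a b : Type*} [Fintype a] [Fintype b]
    {ρ : Matrix (a × b) (a × b) ℂ} (hρ : ρ.PosSemidef) : (ptraceFst ρ).PosSemidef := by
  rw [ptraceFst_eq_sum_submatrix]
  exact posSemidef_sum _ fun k _ => hρ.submatrix _

theorem ptraceSnd_sum_smul {a b ι : Type*} [Fintype b] [Fintype ι]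
    (c : ι → ℂ) (ρ : ι → Matrix (a × b) (a × b) ℂ) :
    ptraceSnd (∑ i, c i • ρ i) = ∑ i, c i • ptraceSnd (ρ i) := by
  ext j k
  simp only [ptraceSnd, of_apply, Matrix.sum_apply, Matrix.smul_apply, smul_eq_mul,
    Finset.mul_sum]
  exact Finset.sum_comm

theorem ptraceFst_sum_smul {a b ι : Type*} [Fintype a] [Fintype ι]
    (c : ι → ℂ) (ρ : ι → Matrix (a × b) (a × b) ℂ) :
    ptraceFst (∑ i, c i • ρ i) = ∑ i, c i • ptraceFst (ρ i) := by
  ext j k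
  simp only [ptraceFst, of_apply, Matrix.sum_apply, Matrix.smul_apply, smul_eq_mul,
    Finset.mul_sum]
  exact Finset.sum_comm

theorem sum_mul_vnEntropy_le_vnEntropy_sum {n ι : Type*} [Fintype n] [DecidableEq n]
    [Fintype ι] {p : ι → ℝ} (hp : ∀ i, 0 ≤ p i) (hp1 : ∑ i, p i = 1)
    {σ : ι → Matrix n n ℂ} (hσ : ∀ i, (σ i).PosSemidef) :
    ∑ i, p i * vnEntropy (σ i) ≤ vnEntropy (∑ i, (p i : ℂ) • σ i) := by
  have hH : (∑ i, (p i : ℂ) • σ i).PosSemidef :=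
    posSemidef_sum _ fun i _ => (hσ i).smul (by exact_mod_cast hp i)
  simp only [vnEntropy, dif_pos hH.1, dif_pos (hσ _).1, mul_div_assoc', ← Finset.sum_div]
  gcongr
  exact Real.concaveOn_negMulLog.sum_mul_sum_map_eigenvalues_le hp hp1 hσ hH.1

theorem info_gain_le_entropy_decrease_general {a b ι : Type*} [Fintype a] [Fintype b] [Fintype ι]
    [DecidableEq a] [DecidableEq b]
    (p : ι → ℝ) (hp : ∀ i, 0 ≤ p i) (hp1 : ∑ i, p i = 1)
    (ρ : ι → Matrix (a × b) (a × b) ℂ)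
    (hρ : ∀ i, (ρ i).PosSemidef ∧ (ρ i).trace = 1) :
    ∑ i, p i * mutInfo (ρ i) - mutInfo (∑ i, (p i : ℂ) • ρ i)
      ≤ vnEntropy (∑ i, (p i : ℂ) • ρ i) - ∑ i, p i * vnEntropy (ρ i) := by
  have hA := sum_mul_vnEntropy_le_vnEntropy_sum hp hp1 fun i => ptraceSnd_posSemidef (hρ i).1
  have hB := sum_mul_vnEntropy_le_vnEntropy_sum hp hp1 fun i => ptraceFst_posSemidef (hρ i).1
  rw [← ptraceSnd_sum_smul] at hA
  rw [← ptraceFst_sum_smul] at hB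
  simp only [mutInfo, mul_sub, mul_add, Finset.sum_sub_distrib, Finset.sum_add_distrib]
  linarith

/-- Information gain is bounded by entropy decrease:
Σ_i p_i I(ρ^i) − I(ρ̄) ≤ S(ρ̄) − Σ_i p_i S(ρ^i). -/
theorem info_gain_le_entropy_decrease {a b ι : Type*} [Fintype a] [Fintype b] [Fintype ι]
    [DecidableEq a] [DecidableEq b] [DecidableEq ι]
    (p : ι → ℝ) (hp : ∀ i, 0 ≤ p i) (hp1 : ∑ i, p i = 1)
    (ρ : ι → Matrix (a × b) (a × b) ℂ)
    (hρ : ∀ i, (ρ i).PosSemidef ∧ (ρ i).trace = 1) :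
    ∑ i, p i * mutInfo (ρ i) - mutInfo (∑ i, (p i : ℂ) • ρ i)
      ≤ vnEntropy (∑ i, (p i : ℂ) • ρ i) - ∑ i, p i * vnEntropy (ρ i) :=
  info_gain_le_entropy_decrease_general p hp hp1 ρ hρ
end

section
/- Shannon-entropy lower bound for GHZ-to-EPR conversion: if {p_i} is a probability distribution, {ρ^i_{AB}} are two-qubit maximally entangled pure states, and Σ_i p_i ρ^i_{AB} = (|00⟩⟨00| + |11⟩⟨11|)/2, then H({p_i}) ≥ 1. -/
open Matrix Kronecker ComplexOrder

/-- The maximally classically correlated two-qubit state (|00⟩⟨00| + |11⟩⟨11|)/2. -/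
noncomputable def rhoCorr : Matrix (Fin 2 × Fin 2) (Fin 2 × Fin 2) ℂ :=
  Matrix.of fun x y => if x = y ∧ x.1 = x.2 then (1/2 : ℂ) else 0

/-!
For each `i` with `p i > 0`, the vanishing diagonal entries of the average at `|01⟩` and `|10⟩`
force `ρ^i` to live on `span {|00⟩, |11⟩}`, and maximal entanglement then makes its coherence
`⟨00|ρ^i|11⟩` have modulus `1/2`. The average has coherence `0`, so no single term `p j / 2` can
outweigh the others: `p j ≤ 1/2` for all `j`, whence `H(p) ≥ -log (1/2) = 1` bit.
-/

section Probability

variable {ι : Type*} [Fintype ι]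

theorem two_mul_norm_le_sum_norm_of_sum_eq_zero {E : Type*} [SeminormedAddCommGroup E]
    (w : ι → E) (h : ∑ i, w i = 0) (j : ι) : 2 * ‖w j‖ ≤ ∑ i, ‖w i‖ := by
  classical
  have hw : w j = -∑ i ∈ Finset.univ.erase j, w i := by
    rw [eq_neg_iff_add_eq_zero, Finset.add_sum_erase _ _ (Finset.mem_univ j), h]
  have hrest : ‖w j‖ ≤ ∑ i ∈ Finset.univ.erase j, ‖w i‖ := by
    rw [hw, norm_neg]
    exact norm_sum_le _ _
  rw [← Finset.add_sum_erase _ _ (Finset.mem_univ j)]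
  linarith

theorem le_half_of_sum_smul_eq_zero {E : Type*} [SeminormedAddCommGroup E] [NormedSpace ℝ E]
    (p : ι → ℝ) (hp : ∀ i, 0 ≤ p i) (hp1 : ∑ i, p i = 1) (z : ι → E) (r : ℝ) (hr : 0 < r)
    (hz : ∀ i, 0 < p i → ‖z i‖ = r) (h : ∑ i, p i • z i = 0) (j : ι) : p j ≤ 1 / 2 := by
  have hnorm : ∀ i, ‖p i • z i‖ = p i * r := by
    intro i
    rcases (hp i).eq_or_lt with hpi | hpi
    · simp [← hpi]
    · rw [norm_smul, Real.norm_of_nonneg (hp i), hz i hpi]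
  have := two_mul_norm_le_sum_norm_of_sum_eq_zero _ h j
  simp only [hnorm, ← Finset.sum_mul, hp1] at this
  nlinarith

theorem neg_log_le_sum_negMulLog_of_le (p : ι → ℝ) (hp : ∀ i, 0 ≤ p i) (hp1 : ∑ i, p i = 1)
    (c : ℝ) (hc : ∀ i, p i ≤ c) : -Real.log c ≤ ∑ i, Real.negMulLog (p i) := by
  calc -Real.log c = ∑ i, p i * -Real.log c := by rw [← Finset.sum_mul, hp1, one_mul]
    _ ≤ ∑ i, Real.negMulLog (p i) := by
      refine Finset.sum_le_sum fun i _ => ?_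
      rcases (hp i).eq_or_lt with hpi | hpi
      · simp [← hpi]
      · rw [Real.negMulLog, neg_mul, mul_neg]
        exact neg_le_neg (mul_le_mul_of_nonneg_left (Real.log_le_log hpi (hc i)) (hp i))

end Probability

section PureStates

variable {n : Type*}

theorem vecMulVec_star_apply_self (v : n → ℂ) (x : n) :
    vecMulVec v (star v) x x = ((‖v x‖ ^ 2 : ℝ) : ℂ) := by
  rw [vecMulVec_apply, Pi.star_apply, Complex.star_def, Complex.mul_conj']
  push_cast
  rfl

theorem apply_eq_zero_of_sum_smul_vecMulVec_apply_self_eq_zero {ι : Type*} [Fintype ι]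
    (p : ι → ℝ) (hp : ∀ i, 0 ≤ p i) (v : ι → n → ℂ) (x : n)
    (h : (∑ i, (p i : ℂ) • vecMulVec (v i) (star (v i))) x x = 0) (i : ι) (hpi : 0 < p i) :
    v i x = 0 := by
  have hsum : ∑ i, p i * ‖v i x‖ ^ 2 = 0 := by
    simp only [Matrix.sum_apply, Matrix.smul_apply, vecMulVec_star_apply_self, smul_eq_mul] at h
    exact_mod_cast h
  have hterm := (Finset.sum_eq_zero_iff_of_nonneg fun i _ =>
    mul_nonneg (hp i) (sq_nonneg _)).1 hsum i (Finset.mem_univ i)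
  simpa [hpi.ne'] using hterm

theorem ptraceSnd_vecMulVec_star_apply_self {m : Type*} [Fintype m] (v : n × m → ℂ) (a : n) :
    ptraceSnd (vecMulVec v (star v)) a a = ((∑ k, ‖v (a, k)‖ ^ 2 : ℝ) : ℂ) := by
  simp only [ptraceSnd, of_apply, vecMulVec_star_apply_self]
  push_cast
  rfl

end PureStates

theorem norm_vecMulVec_star_apply_eq_half_of_ptraceSnd_eq (v : Fin 2 × Fin 2 → ℂ)
    (h01 : v (0, 1) = 0) (h10 : v (1, 0) = 0)
    (hSnd : ptraceSnd (vecMulVec v (star v)) = (1 / 2 : ℂ) • (1 : Matrix (Fin 2) (Fin 2) ℂ)) :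
    ‖vecMulVec v (star v) (0, 0) (1, 1)‖ = 1 / 2 := by
  have hdiag : ∀ a, ∑ k, ‖v (a, k)‖ ^ 2 = 1 / 2 := fun a => by
    have := ptraceSnd_vecMulVec_star_apply_self v a
    rw [hSnd] at this
    simp only [Matrix.smul_apply, one_apply_eq, smul_eq_mul, mul_one] at this
    apply Complex.ofReal_injective
    rw [← this]
    norm_num
  have h0 := hdiag 0
  have h1 := hdiag 1
  simp only [Fin.sum_univ_two, h01, h10, norm_zero, ne_eq, OfNat.ofNat_ne_zero,
    not_false_eq_true, zero_pow, add_zero, zero_add] at h0 h1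
  rw [vecMulVec_apply, Pi.star_apply, norm_mul, norm_star]
  have hprod : (‖v (0, 0)‖ * ‖v (1, 1)‖) ^ 2 = (1 / 2) ^ 2 := by
    rw [mul_pow, h0, h1]
    norm_num
  exact (pow_left_inj₀ (by positivity) (by norm_num) two_ne_zero).1 hprod

theorem shannon_bound_GHZ_EPR_general {ι : Type*} [Fintype ι]
    (p : ι → ℝ) (hp : ∀ i, 0 ≤ p i) (hp1 : ∑ i, p i = 1)
    (ρ : ι → Matrix (Fin 2 × Fin 2) (Fin 2 × Fin 2) ℂ)
    (hpure : ∀ i, ∃ v : Fin 2 × Fin 2 → ℂ,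
      ρ i = Matrix.vecMulVec v (star v) ∧
      ptraceSnd (ρ i) = (1/2 : ℂ) • (1 : Matrix (Fin 2) (Fin 2) ℂ) ∧
      ptraceFst (ρ i) = (1/2 : ℂ) • (1 : Matrix (Fin 2) (Fin 2) ℂ))
    (havg : ∑ i, (p i : ℂ) • ρ i = rhoCorr) :
    1 ≤ (∑ i, Real.negMulLog (p i)) / Real.log 2 := by
  choose v hv hSnd _ using hpure
  simp only [hv] at havg hSnd
  have hentry : ∀ x y, ∑ i, p i • vecMulVec (v i) (star (v i)) x y = rhoCorr x y := fun x y => by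
    simp only [← havg, Matrix.sum_apply, Matrix.smul_apply, Complex.real_smul, smul_eq_mul]
  have hcoh : ∀ i, 0 < p i → ‖vecMulVec (v i) (star (v i)) (0, 0) (1, 1)‖ = 1 / 2 :=
    fun i hpi => norm_vecMulVec_star_apply_eq_half_of_ptraceSnd_eq (v i)
      (apply_eq_zero_of_sum_smul_vecMulVec_apply_self_eq_zero p hp v _
        (by rw [havg]; simp [rhoCorr]) i hpi)
      (apply_eq_zero_of_sum_smul_vecMulVec_apply_self_eq_zero p hp v _
        (by rw [havg]; simp [rhoCorr]) i hpi)
      (hSnd i)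
  have hhalf : ∀ j, p j ≤ 1 / 2 :=
    le_half_of_sum_smul_eq_zero p hp hp1 _ (1 / 2) (by norm_num) hcoh
      (by rw [hentry]; simp [rhoCorr])
  have hbits := neg_log_le_sum_negMulLog_of_le p hp hp1 _ hhalf
  rw [one_div, Real.log_inv, neg_neg] at hbits
  rwa [le_div_iff₀ (Real.log_pos one_lt_two), one_mul]

/-- Shannon-entropy lower bound for GHZ-to-EPR conversion: if {p_i} is a probability
distribution and {ρ^i} are two-qubit maximally entangled pure states averaging to
(|00⟩⟨00| + |11⟩⟨11|)/2, then H({p_i}) ≥ 1 (entropies in bits). -/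
theorem shannon_bound_GHZ_EPR {ι : Type*} [Fintype ι] [DecidableEq ι]
    (p : ι → ℝ) (hp : ∀ i, 0 ≤ p i) (hp1 : ∑ i, p i = 1)
    (ρ : ι → Matrix (Fin 2 × Fin 2) (Fin 2 × Fin 2) ℂ)
    (hpure : ∀ i, ∃ v : Fin 2 × Fin 2 → ℂ,
      ρ i = Matrix.vecMulVec v (star v) ∧
      ptraceSnd (ρ i) = (1/2 : ℂ) • (1 : Matrix (Fin 2) (Fin 2) ℂ) ∧
      ptraceFst (ρ i) = (1/2 : ℂ) • (1 : Matrix (Fin 2) (Fin 2) ℂ))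
    (havg : ∑ i, (p i : ℂ) • ρ i = rhoCorr) :
    1 ≤ (∑ i, Real.negMulLog (p i)) / Real.log 2 :=
  shannon_bound_GHZ_EPR_general p hp hp1 ρ hpure havg
end

section
/- Optimal ensemble for two orthogonal-support states: for a family of states ρ_F = F·ρ_even + (1−F)·ρ_odd with F ∈ [1/3, 1], where ρ_even, ρ_odd are orthogonal density matrices each of entropy 1, the maximal Holevo quantity over all ensembles {(p_i, ρ_{F_i})} equals max_{p∈[0,1]} [H((2p+1)/3) − (1−p)H(1/3)], where H is binary entropy in bits. -/
open Matrix Kronecker ComplexOrder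

/-- Binary entropy in bits. -/
noncomputable def H2 (x : ℝ) : ℝ := Real.binEntropy x / Real.log 2

/-- ρ_even = (|00⟩⟨00| + |11⟩⟨11|)/2. -/
noncomputable def rhoEven : Matrix (Fin 2 × Fin 2) (Fin 2 × Fin 2) ℂ :=
  Matrix.of fun x y => if x = y ∧ x.1 = x.2 then (1/2 : ℂ) else 0

/-- ρ_odd = (|01⟩⟨01| + |10⟩⟨10|)/2. -/
noncomputable def rhoOdd : Matrix (Fin 2 × Fin 2) (Fin 2 × Fin 2) ℂ :=
  Matrix.of fun x y => if x = y ∧ x.1 ≠ x.2 then (1/2 : ℂ) else 0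

/-- ρ_F = F·ρ_even + (1−F)·ρ_odd. -/
noncomputable def rhoF (F : ℝ) : Matrix (Fin 2 × Fin 2) (Fin 2 × Fin 2) ℂ :=
  (F : ℂ) • rhoEven + ((1 - F : ℝ) : ℂ) • rhoOdd

/-!
`ρ_F` is diagonal with spectrum `F/2, F/2, (1-F)/2, (1-F)/2`, so `S(ρ_F) = H(F) + 1`, and `F ↦ ρ_F`
is affine. Hence the Holevo quantity of `{(pᵢ, ρ_{Fᵢ})}` is `H(F̄) - ∑ pᵢ H(Fᵢ)` with
`F̄ = ∑ pᵢ Fᵢ`. On `[1/3, 1]` the concave `H` lies above its chord from `(1/3, H(1/3))` to `(1, 0)`,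
so `∑ pᵢ H(Fᵢ) ≥ (1 - p) H(1/3)` where `F̄ = (2p+1)/3`, and the two-point ensemble
`{(p, ρ_1), (1 - p, ρ_{1/3})}` attains this bound.
-/

theorem Matrix.IsHermitian.sum_comp_eigenvalues_of_eq_diagonal {𝕜 n : Type*} [RCLike 𝕜]
    [Fintype n] [DecidableEq n] {A : Matrix n n 𝕜} (hA : A.IsHermitian) {d : n → ℝ}
    (hd : A = diagonal (RCLike.ofReal ∘ d)) (f : ℝ → ℝ) :
    ∑ i, f (hA.eigenvalues i) = ∑ i, f (d i) := by
  have hroots : Finset.univ.val.map (RCLike.ofReal ∘ hA.eigenvalues : n → 𝕜)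
      = Finset.univ.val.map (RCLike.ofReal ∘ d) := by
    rw [← hA.roots_charpoly_eq_eigenvalues, hd, charpoly_diagonal, Finset.prod_eq_multiset_prod]
    simpa only [Multiset.map_map, Function.comp_def] using
      Polynomial.roots_multiset_prod_X_sub_C (Finset.univ.val.map (RCLike.ofReal ∘ d : n → 𝕜))
  have hspec : Finset.univ.val.map hA.eigenvalues = Finset.univ.val.map d :=
    Multiset.map_injective RCLike.ofReal_injective (by simpa only [Multiset.map_map] using hroots)
  simpa only [Finset.sum_eq_multiset_sum, Multiset.map_map, Function.comp_def] using
    congrArg (fun s => (s.map f).sum) hspec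

theorem vnEntropy_diagonal {n : Type*} [Fintype n] [DecidableEq n] (d : n → ℝ) :
    vnEntropy (diagonal (Complex.ofReal ∘ d)) = (∑ i, Real.negMulLog (d i)) / Real.log 2 := by
  have hD : (diagonal (Complex.ofReal ∘ d)).IsHermitian :=
    isHermitian_diagonal_of_self_adjoint _ (funext fun i => Complex.conj_ofReal (d i))
  rw [vnEntropy, dif_pos hD, hD.sum_comp_eigenvalues_of_eq_diagonal rfl]

theorem H2_one : H2 1 = 0 := by
  simp [H2]

theorem mul_H2_le_H2 {a x : ℝ} (ha : 0 ≤ a) (hax : a ≤ x) (hx : x ≤ 1) (ha₁ : a < 1) :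
    (1 - x) / (1 - a) * H2 a ≤ H2 x := by
  have h1a : 0 < 1 - a := by linarith
  have hconc := Real.strictConcave_binEntropy.concaveOn.2
    (show a ∈ Set.Icc (0 : ℝ) 1 from ⟨ha, ha₁.le⟩) (show (1 : ℝ) ∈ Set.Icc (0 : ℝ) 1 by simp)
    (show 0 ≤ (1 - x) / (1 - a) from div_nonneg (by linarith) h1a.le)
    (show 0 ≤ (x - a) / (1 - a) from div_nonneg (by linarith) h1a.le) (by field_simp; ring)
  have hmean : (1 - x) / (1 - a) * a + (x - a) / (1 - a) * 1 = x := by field_simp; ring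
  simp only [smul_eq_mul, Real.binEntropy_one, mul_zero, add_zero, hmean] at hconc
  rw [H2, H2, ← mul_div_assoc]
  exact div_le_div_of_nonneg_right hconc (Real.log_nonneg one_le_two)

noncomputable def rhoFEigenvalues (F : ℝ) : Fin 2 × Fin 2 → ℝ :=
  fun x => if x.1 = x.2 then F / 2 else (1 - F) / 2

theorem rhoF_eq_diagonal (F : ℝ) : rhoF F = diagonal (Complex.ofReal ∘ rhoFEigenvalues F) := by
  ext x y
  by_cases hxy : x = y
  · subst hxy
    by_cases h : x.1 = x.2 <;> simp [rhoF, rhoEven, rhoOdd, rhoFEigenvalues, h] <;> ring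
  · simp [rhoF, rhoEven, rhoOdd, hxy]

theorem vnEntropy_rhoF (F : ℝ) : vnEntropy (rhoF F) = H2 F + 1 := by
  have hhalf : ∀ x : ℝ, Real.negMulLog (x / 2) = Real.negMulLog x / 2 + x / 2 * Real.log 2 := by
    intro x
    rw [div_eq_mul_inv, Real.negMulLog_mul]
    simp only [Real.negMulLog, Real.log_inv]
    ring
  have hsum : ∑ x, Real.negMulLog (rhoFEigenvalues F x)
      = 2 * Real.negMulLog (F / 2) + 2 * Real.negMulLog ((1 - F) / 2) := by
    simp only [rhoFEigenvalues, Fintype.sum_prod_type, Fin.sum_univ_two, ↓reduceIte, zero_ne_one,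
      one_ne_zero]
    ring
  rw [rhoF_eq_diagonal, vnEntropy_diagonal, hsum, hhalf, hhalf, H2,
    Real.binEntropy_eq_negMulLog_add_negMulLog_one_sub]
  field_simp
  ring

theorem rhoF_eq_add_smul (F : ℝ) : rhoF F = rhoOdd + (F : ℂ) • (rhoEven - rhoOdd) := by
  simp only [rhoF, Complex.ofReal_sub, Complex.ofReal_one, smul_sub, sub_smul, one_smul]
  abel

theorem sum_smul_rhoF {ι : Type*} (s : Finset ι) (p F : ι → ℝ) (hp : ∑ i ∈ s, p i = 1) :
    ∑ i ∈ s, (p i : ℂ) • rhoF (F i) = rhoF (∑ i ∈ s, p i * F i) := by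
  simp only [rhoF_eq_add_smul, smul_add, smul_smul, Finset.sum_add_distrib, ← Finset.sum_smul,
    ← Complex.ofReal_mul, ← Complex.ofReal_sum, hp, Complex.ofReal_one, one_smul]

theorem holevo_rhoF {ι : Type*} [Fintype ι] (p F : ι → ℝ) (hp : ∑ i, p i = 1) :
    vnEntropy (∑ i, (p i : ℂ) • rhoF (F i)) - ∑ i, p i * vnEntropy (rhoF (F i))
      = H2 (∑ i, p i * F i) - ∑ i, p i * H2 (F i) := by
  simp only [sum_smul_rhoF _ p F hp, vnEntropy_rhoF, mul_add, mul_one, Finset.sum_add_distrib, hp]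
  ring

theorem mul_H2_le_sum_mul_H2 {ι : Type*} {s : Finset ι} {p F : ι → ℝ} {a : ℝ} (ha : 0 ≤ a)
    (ha₁ : a < 1) (hp₀ : ∀ i ∈ s, 0 ≤ p i) (hp₁ : ∑ i ∈ s, p i = 1)
    (hF : ∀ i ∈ s, F i ∈ Set.Icc a 1) :
    (1 - ∑ i ∈ s, p i * F i) / (1 - a) * H2 a ≤ ∑ i ∈ s, p i * H2 (F i) :=
  calc (1 - ∑ i ∈ s, p i * F i) / (1 - a) * H2 a
      = ∑ i ∈ s, p i * ((1 - F i) / (1 - a) * H2 a) := by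
        have hmass : 1 - ∑ i ∈ s, p i * F i = ∑ i ∈ s, p i * (1 - F i) := by
          simp only [mul_sub, mul_one, Finset.sum_sub_distrib, hp₁]
        rw [hmass, Finset.sum_div, Finset.sum_mul]
        exact Finset.sum_congr rfl fun i _ => by ring
    _ ≤ ∑ i ∈ s, p i * H2 (F i) :=
        Finset.sum_le_sum fun i hi => mul_le_mul_of_nonneg_left
          (mul_H2_le_H2 ha (hF i hi).1 (hF i hi).2 ha₁) (hp₀ i hi)

/-- The maximal Holevo quantity over all ensembles {(p_i, ρ_{F_i})} with F_i ∈ [1/3, 1]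
equals max over p ∈ [0,1] of H((2p+1)/3) − (1−p)·H(1/3). -/
theorem max_holevo_rhoF :
    sSup {x : ℝ | ∃ (n : ℕ) (p : Fin n → ℝ) (F : Fin n → ℝ),
        (∀ i, 0 ≤ p i) ∧ (∑ i, p i = 1) ∧ (∀ i, F i ∈ Set.Icc (1/3 : ℝ) 1) ∧
        x = vnEntropy (∑ i, (p i : ℂ) • rhoF (F i)) - ∑ i, p i * vnEntropy (rhoF (F i))}
      = sSup {y : ℝ | ∃ p ∈ Set.Icc (0 : ℝ) 1,
          y = H2 ((2 * p + 1) / 3) - (1 - p) * H2 (1/3)} := by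
  apply csSup_eq_csSup_of_forall_exists_le
  · rintro x ⟨n, p, F, hp₀, hp₁, hF, rfl⟩
    rw [holevo_rhoF p F hp₁]
    set Fmean := ∑ i, p i * F i
    have hFmean : Fmean ∈ Set.Icc (1/3 : ℝ) 1 :=
      (convex_Icc _ _).sum_mem (fun i _ => hp₀ i) hp₁ (fun i _ => hF i)
    have hchord : (1 - (3 * Fmean - 1) / 2) * H2 (1/3) ≤ ∑ i, p i * H2 (F i) := by
      convert mul_H2_le_sum_mul_H2 (a := 1/3) (by norm_num) (by norm_num) (fun i _ => hp₀ i) hp₁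
        (fun i _ => hF i) using 2
      ring
    refine ⟨_, ⟨(3 * Fmean - 1) / 2, ⟨by linarith [hFmean.1], by linarith [hFmean.2]⟩, rfl⟩, ?_⟩
    rw [show (2 * ((3 * Fmean - 1) / 2) + 1) / 3 = Fmean by ring]
    linarith
  · rintro y ⟨q, ⟨hq₀, hq₁⟩, rfl⟩
    refine ⟨_, ⟨2, ![q, 1 - q], ![1, 1/3], ?_, by simp, ?_, rfl⟩, le_of_eq ?_⟩
    · intro i; fin_cases i <;> simp <;> linarith
    · intro i; fin_cases i <;> norm_num
    · rw [holevo_rhoF _ _ (by simp)]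
      simp only [Fin.sum_univ_two, cons_val_zero, cons_val_one, cons_val_fin_one, H2_one]
      rw [show q * 1 + (1 - q) * (1 / 3) = (2 * q + 1) / 3 by ring]
      ring
end
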